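/- Let R be a positive semidefinite Hermitian (k+1)×(k+1) matrix of the block form R = [[c, b*], [b, Q]] where Q is k×k Hermitian positive semidefinite, b is a k×1 vector, and c ≥ 0. If η_1 is any lower bound on the minimum eigenvalue of Q, then the minimum eigenvalue of R satisfies λ_min(R) ≥ (c + η_1)/2 - sqrt( (c - η_1)²/4 + b*b ). -/

import Mathlib

open Complex Matrix
open scoped ComplexOrder
open ComplexConjugate

/-!
Let `v = (x, y)` be a unit eigenvector of `R` for the eigenvalue `λ`, and put `p = |x|`,
`q = ‖y‖`, `β = ‖b‖`, so that `p² + q² = 1`. Then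
`λ = v* R v = c p² + 2 Re (x̄ b* y) + y* Q y ≥ c p² - 2 β p q + η q²`
by Cauchy–Schwarz and the eigenvalue bound for `Q`. The right-hand side is the quadratic form of
the real symmetric matrix `[[c, -β], [-β, η]]` at a unit vector, hence at least its smaller
eigenvalue `(c + η) / 2 - √((c - η)² / 4 + β²)`.
-/

theorem sub_sqrt_mul_le_quadratic_form (c η β p q : ℝ) :
    ((c + η) / 2 - √((c - η) ^ 2 / 4 + β ^ 2)) * (p ^ 2 + q ^ 2) ≤
      c * p ^ 2 + 2 * β * p * q + η * q ^ 2 := by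
  have hs : √((c - η) ^ 2 / 4 + β ^ 2) ^ 2 = (c - η) ^ 2 / 4 + β ^ 2 :=
    Real.sq_sqrt (by positivity)
  have hs0 := Real.sqrt_nonneg ((c - η) ^ 2 / 4 + β ^ 2)
  generalize √((c - η) ^ 2 / 4 + β ^ 2) = s at hs hs0 ⊢
  rcases hs0.eq_or_lt with rfl | hs_pos
  · have hβ : β = 0 := by nlinarith
    have hcη : c = η := by nlinarith
    subst hβ hcη
    linarith
  · -- With `μ = (c + η) / 2 - s` one has `(c - μ) (η - μ) = β²`, which makes the scaled
    -- difference a sum of two squares.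
    have hsq : 0 ≤ 2 * s * (c * p ^ 2 + 2 * β * p * q + η * q ^ 2 -
        ((c + η) / 2 - s) * (p ^ 2 + q ^ 2)) := by
      rw [show 2 * s * (c * p ^ 2 + 2 * β * p * q + η * q ^ 2 -
          ((c + η) / 2 - s) * (p ^ 2 + q ^ 2)) =
          (((c - η) / 2 + s) * p + β * q) ^ 2 + (β * p + ((η - c) / 2 + s) * q) ^ 2 by
        linear_combination (p ^ 2 + q ^ 2) * hs]
      positivity
    exact le_of_sub_nonneg (nonneg_of_mul_nonneg_right hsq (by positivity))

namespace Matrix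

variable {𝕜 n : Type*} [RCLike 𝕜] [Fintype n]

theorem re_star_dotProduct_self (y : n → 𝕜) : RCLike.re (star y ⬝ᵥ y) = ∑ j, ‖y j‖ ^ 2 := by
  simp [dotProduct, RCLike.conj_mul]

theorem norm_star_dotProduct_le (b y : n → 𝕜) :
    ‖star b ⬝ᵥ y‖ ≤ √(∑ j, ‖b j‖ ^ 2) * √(∑ j, ‖y j‖ ^ 2) := by
  have := norm_inner_le_norm (𝕜 := 𝕜) (WithLp.toLp 2 b) (WithLp.toLp 2 y)
  rwa [EuclideanSpace.inner_toLp_toLp, dotProduct_comm, EuclideanSpace.norm_eq,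
    EuclideanSpace.norm_eq] at this

open scoped MatrixOrder in
theorem IsHermitian.posSemidef_sub_algebraMap [DecidableEq n] {A : Matrix n n 𝕜}
    (hA : A.IsHermitian) {η : ℝ} (hη : ∀ i, η ≤ hA.eigenvalues i) :
    (A - algebraMap ℝ _ η).PosSemidef := by
  rw [← le_iff, algebraMap_le_iff_le_spectrum hA.isSelfAdjoint,
    hA.spectrum_real_eq_range_eigenvalues]
  rintro _ ⟨i, rfl⟩
  exact hη i

theorem IsHermitian.mul_sum_norm_sq_le_re_dotProduct_mulVec [DecidableEq n] {A : Matrix n n 𝕜}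
    (hA : A.IsHermitian) {η : ℝ} (hη : ∀ i, η ≤ hA.eigenvalues i) (y : n → 𝕜) :
    η * ∑ j, ‖y j‖ ^ 2 ≤ RCLike.re (star y ⬝ᵥ (A *ᵥ y)) := by
  have := (hA.posSemidef_sub_algebraMap hη).re_dotProduct_nonneg y
  rw [sub_mulVec, dotProduct_sub, Algebra.algebraMap_eq_smul_one, smul_mulVec, one_mulVec,
    dotProduct_smul, map_sub, RCLike.real_smul_eq_coe_mul, RCLike.re_ofReal_mul,
    re_star_dotProduct_self] at this
  linarith

theorem re_star_dotProduct_fromBlocks_mulVec (c : ℝ) (b : n → 𝕜) (Q : Matrix n n 𝕜)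
    (v : Fin 1 ⊕ n → 𝕜) :
    RCLike.re (star v ⬝ᵥ (fromBlocks (of fun _ _ : Fin 1 => (c : 𝕜))
      (of fun (_ : Fin 1) j => star (b j)) (of fun i (_ : Fin 1) => b i) Q *ᵥ v)) =
      c * ‖v (.inl 0)‖ ^ 2 + 2 * RCLike.re (star (v (.inl 0)) * (star b ⬝ᵥ (v ∘ .inr))) +
        RCLike.re (star (v ∘ .inr) ⬝ᵥ (Q *ᵥ (v ∘ .inr))) := by
  set x := v (.inl 0)
  set y := v ∘ .inr
  have hv : v = Sum.elim (fun _ => x) y := by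
    ext (i | j)
    · rw [Fin.fin_one_eq_zero i]; rfl
    · rfl
  have hsplit : star v ⬝ᵥ (fromBlocks (of fun _ _ : Fin 1 => (c : 𝕜))
      (of fun (_ : Fin 1) j => star (b j)) (of fun i (_ : Fin 1) => b i) Q *ᵥ v) =
      c * (star x * x) + (star x * (star b ⬝ᵥ y) + star (star x * (star b ⬝ᵥ y))) +
        star y ⬝ᵥ (Q *ᵥ y) := by
    have hcomm : ∑ j, conj (y j) * (b j * x) = ∑ j, x * (b j * conj (y j)) :=
      Finset.sum_congr rfl fun _ _ => by ring
    rw [hv, fromBlocks_mulVec]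
    simp only [dotProduct, Pi.star_apply, RCLike.star_def, Sum.elim_comp_inl, Sum.elim_comp_inr,
      Fintype.sum_sum_type, Finset.univ_unique, Fin.default_eq_zero, Sum.elim_inl,
      Pi.add_apply, mulVec, of_apply, Finset.sum_const, Finset.card_singleton, one_smul, mul_add,
      Finset.mul_sum, smul_add, Sum.elim_inr, Finset.sum_add_distrib, star_sum, star_mul',
      RingHomCompTriple.comp_apply, RingHom.id_apply]
    rw [hcomm]
    ring
  rw [hsplit]
  simp only [RCLike.star_def, RCLike.add_conj, RCLike.conj_mul]
  simp

theorem le_re_star_dotProduct_fromBlocks_mulVec [DecidableEq n] {c η : ℝ} {b : n → 𝕜}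
    {Q : Matrix n n 𝕜} (hQ : Q.IsHermitian) (hη : ∀ i, η ≤ hQ.eigenvalues i)
    {v : Fin 1 ⊕ n → 𝕜} (hv : ∑ j, ‖v j‖ ^ 2 = 1) :
    (c + η) / 2 - √((c - η) ^ 2 / 4 + ∑ j, ‖b j‖ ^ 2) ≤
      RCLike.re (star v ⬝ᵥ (fromBlocks (of fun _ _ : Fin 1 => (c : 𝕜))
        (of fun (_ : Fin 1) j => star (b j)) (of fun i (_ : Fin 1) => b i) Q *ᵥ v)) := by
  rw [re_star_dotProduct_fromBlocks_mulVec]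
  set x := v (.inl 0)
  set y := v ∘ .inr
  have hb : √(∑ j, ‖b j‖ ^ 2) ^ 2 = ∑ j, ‖b j‖ ^ 2 := Real.sq_sqrt (by positivity)
  have hy : √(∑ j, ‖y j‖ ^ 2) ^ 2 = ∑ j, ‖y j‖ ^ 2 := Real.sq_sqrt (by positivity)
  set β := √(∑ j, ‖b j‖ ^ 2)
  set q := √(∑ j, ‖y j‖ ^ 2)
  have hxy : ‖x‖ ^ 2 + q ^ 2 = 1 := by
    rw [hy, ← hv, Fintype.sum_sum_type, Fin.sum_univ_one]
    rfl
  have hcross : -(β * ‖x‖ * q) ≤ RCLike.re (star x * (star b ⬝ᵥ y)) := by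
    have hnorm : ‖star x * (star b ⬝ᵥ y)‖ ≤ β * ‖x‖ * q :=
      calc ‖star x * (star b ⬝ᵥ y)‖ = ‖x‖ * ‖star b ⬝ᵥ y‖ := by rw [norm_mul, norm_star]
        _ ≤ ‖x‖ * (β * q) := by gcongr; exact norm_star_dotProduct_le b y
        _ = β * ‖x‖ * q := by ring
    linarith [neg_abs_le (RCLike.re (star x * (star b ⬝ᵥ y))),
      RCLike.abs_re_le_norm (star x * (star b ⬝ᵥ y))]
  have hQy := hQ.mul_sum_norm_sq_le_re_dotProduct_mulVec hη y
  have hquad := sub_sqrt_mul_le_quadratic_form c η (-β) ‖x‖ q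
  rw [neg_sq, hb, hxy, mul_one] at hquad
  rw [← hy] at hQy
  linarith

end Matrix

theorem stmt_9_general (k : ℕ) (c : ℝ) (b : Fin k → ℂ)
    (Q : Matrix (Fin k) (Fin k) ℂ) (hQ : Q.PosSemidef)
    (R : Matrix (Fin 1 ⊕ Fin k) (Fin 1 ⊕ Fin k) ℂ)
    (hR : R = Matrix.fromBlocks
      (Matrix.of fun _ _ : Fin 1 => (c : ℂ))
      (Matrix.of fun (_ : Fin 1) j => star (b j))
      (Matrix.of fun i (_ : Fin 1) => b i) Q)
    (hRpsd : R.PosSemidef)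
    (η : ℝ) (hη : ∀ i, η ≤ hQ.isHermitian.eigenvalues i) :
    ∀ i, (c + η) / 2 - Real.sqrt ((c - η) ^ 2 / 4 + ∑ j, ‖b j‖ ^ 2) ≤
      hRpsd.isHermitian.eigenvalues i := by
  intro i
  subst hR
  rw [hRpsd.isHermitian.eigenvalues_eq]
  refine Matrix.le_re_star_dotProduct_fromBlocks_mulVec hQ.isHermitian hη ?_
  rw [← EuclideanSpace.norm_sq_eq, hRpsd.isHermitian.eigenvectorBasis.orthonormal.1 i, one_pow]

theorem stmt_9 (k : ℕ) (c : ℝ) (hc : 0 ≤ c) (b : Fin k → ℂ)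
    (Q : Matrix (Fin k) (Fin k) ℂ) (hQ : Q.PosSemidef)
    (R : Matrix (Fin 1 ⊕ Fin k) (Fin 1 ⊕ Fin k) ℂ)
    (hR : R = Matrix.fromBlocks
      (Matrix.of fun _ _ : Fin 1 => (c : ℂ))
      (Matrix.of fun (_ : Fin 1) j => star (b j))
      (Matrix.of fun i (_ : Fin 1) => b i) Q)
    (hRpsd : R.PosSemidef)
    (η : ℝ) (hη : ∀ i, η ≤ hQ.isHermitian.eigenvalues i) :
    ∀ i, (c + η) / 2 - Real.sqrt ((c - η) ^ 2 / 4 + ∑ j, ‖b j‖ ^ 2) ≤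
      hRpsd.isHermitian.eigenvalues i :=
  stmt_9_general k c b Q hQ R hR hRpsd η hη
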